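/- arXiv:1911.09965 — 2 statements merged into one kernel-verified Lean document; each statement's English description precedes it below -/
import Mathlib

section
/- Let P > 0 be fixed, 0 < ε < 1, and B(N) = ⌈N^ε⌉. Let G_N = (1/N)∑_{r=0}^{N-1}|H_r|² where H_r are i.i.d. standard complex Gaussian. Then B(N)·E[log(1 + P·N·G_N/B(N))] = Θ(N^ε · log N), i.e., there exist constants c₁, c₂ > 0 and N₀ such that for N > N₀, c₁ ≤ B(N)·E[log(1 + P·N·G_N/B(N))]/(N^ε log N) ≤ c₂. -/
/-!
Write `c = P N / B(N)`, so that the capacity is `B(N) · E[log (1 + c G_N)]` with `E[G_N] = 1`.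
Jensen's inequality for the concave map `s ↦ log (1 + c s)` bounds the expectation above by
`log (1 + c)`. Below, concavity gives `log (1 + c G_N) ≥ (1/N) ∑ log (1 + c |H_r|²)`, and each
term is at least `log (1 + c)` on the event `|H_r|² > 1`, of probability `e⁻¹`; so the expectation
is at least `e⁻¹ log (1 + c)`. Finally `N^{1-ε} ≲ c ≤ P N` because `B(N) = Θ(N^ε)` with `ε < 1`,
hence `log (1 + c) = Θ(log N)`.
-/

open Filter MeasureTheory ProbabilityTheory

/-- The Exponential(1) distribution on `ℝ`. -/
noncomputable def expOneMeasure : Measure ℝ :=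
  volume.withDensity fun x => ENNReal.ofReal (if 0 ≤ x then Real.exp (-x) else 0)

open Real Set
open scoped Finset

lemma expOneMeasure_eq_expMeasure : expOneMeasure = expMeasure 1 := by
  simp only [expOneMeasure, expMeasure, gammaMeasure]
  congr 1
  funext x
  exact (exponentialPDF_eq 1 x).trans (by simp) |>.symm

instance : IsProbabilityMeasure expOneMeasure := by
  rw [expOneMeasure_eq_expMeasure]; exact isProbabilityMeasure_expMeasure one_pos

lemma expOneMeasure_real_Ioi {a : ℝ} (ha : 0 ≤ a) : expOneMeasure.real (Ioi a) = exp (-a) := by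
  rw [← compl_Iic, measureReal_compl measurableSet_Iic, probReal_univ, ← cdf_eq_real,
    expOneMeasure_eq_expMeasure, cdf_expMeasure_eq one_pos, if_pos ha]
  simp

lemma integral_expOneMeasure (f : ℝ → ℝ) :
    ∫ x, f x ∂expOneMeasure = ∫ x in Ioi 0, exp (-x) * f x := by
  have hd : Measurable fun x : ℝ => if 0 ≤ x then exp (-x) else 0 :=
    .ite measurableSet_Ici (by fun_prop) measurable_const
  rw [expOneMeasure, integral_withDensity_eq_integral_toReal_smul hd.ennreal_ofReal
      (.of_forall fun _ => ENNReal.ofReal_lt_top), ← integral_Ici_eq_integral_Ioi,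
    ← integral_indicator measurableSet_Ici]
  congr 1 with x
  by_cases hx : 0 ≤ x <;> simp [hx, (exp_pos _).le]

lemma integral_id_expOneMeasure : ∫ x, x ∂expOneMeasure = 1 := by
  rw [integral_expOneMeasure, ← Gamma_two, Gamma_eq_integral two_pos]
  refine setIntegral_congr_fun measurableSet_Ioi fun x _ => ?_
  norm_num

lemma integrable_id_expOneMeasure : Integrable (fun x : ℝ => x) expOneMeasure :=
  .of_integral_ne_zero (by simp [integral_id_expOneMeasure])

section LogOneAddMul

variable {Ω ι : Type*} [MeasurableSpace Ω] {μ : Measure Ω} {c : ℝ}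

lemma log_one_add_mul_le_tangent (hc : 0 ≤ c) {m s : ℝ} (hm : 0 ≤ m) (hs : 0 < 1 + c * s) :
    log (1 + c * s) ≤ log (1 + c * m) + c / (1 + c * m) * (s - m) := by
  have hcm : 0 < 1 + c * m := by positivity
  have h := log_le_sub_one_of_pos (div_pos hs hcm)
  rw [log_div hs.ne' hcm.ne'] at h
  have heq : (1 + c * s) / (1 + c * m) - 1 = c / (1 + c * m) * (s - m) := by
    field_simp
    ring
  linarith

lemma integrable_log_one_add_mul {S : Ω → ℝ} (hS : Integrable S μ) (hS0 : ∀ᵐ ω ∂μ, 0 ≤ S ω)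
    (hc : 0 ≤ c) : Integrable (fun ω => log (1 + c * S ω)) μ := by
  refine (hS.const_mul c).mono' (measurable_log.comp_aemeasurable
    ((hS.aemeasurable.const_mul c).const_add 1)).aestronglyMeasurable ?_
  filter_upwards [hS0] with ω hω
  have hcS : 0 ≤ c * S ω := mul_nonneg hc hω
  rw [norm_of_nonneg (log_nonneg (by linarith))]
  linarith [log_le_sub_one_of_pos (by linarith : 0 < 1 + c * S ω)]

lemma integral_log_one_add_mul_le [IsProbabilityMeasure μ] {S : Ω → ℝ} (hS : Integrable S μ)
    (hS0 : ∀ᵐ ω ∂μ, 0 ≤ S ω) (hc : 0 ≤ c) :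
    ∫ ω, log (1 + c * S ω) ∂μ ≤ log (1 + c * ∫ ω, S ω ∂μ) := by
  set m := ∫ ω, S ω ∂μ
  have hm : 0 ≤ m := integral_nonneg_of_ae hS0
  have hdev : Integrable (fun ω => c / (1 + c * m) * (S ω - m)) μ :=
    (hS.sub (integrable_const m)).const_mul _
  calc ∫ ω, log (1 + c * S ω) ∂μ
      ≤ ∫ ω, (log (1 + c * m) + c / (1 + c * m) * (S ω - m)) ∂μ := by
        refine integral_mono_of_nonneg ?_ ((integrable_const _).add hdev) ?_
        · filter_upwards [hS0] with ω hω
          exact log_nonneg (by nlinarith)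
        · filter_upwards [hS0] with ω hω
          exact log_one_add_mul_le_tangent hc hm (by nlinarith)
    _ = log (1 + c * m) := by
        rw [integral_add (integrable_const _) hdev, integral_const_mul,
          integral_sub hS (integrable_const m)]
        simp [m]

lemma sum_log_one_add_mul_div_card_le (hc : 0 ≤ c) (s : Finset ι) {x : ι → ℝ}
    (hx : ∀ i ∈ s, 0 ≤ x i) :
    (∑ i ∈ s, log (1 + c * x i)) / #s ≤ log (1 + c * ((∑ i ∈ s, x i) / #s)) := by
  rcases s.eq_empty_or_nonempty with rfl | hs
  · simp
  have hcard : (0 : ℝ) < #s := by exact_mod_cast hs.card_pos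
  have h := strictConcaveOn_log_Ioi.concaveOn.le_map_sum (t := s) (w := fun _ => (#s : ℝ)⁻¹)
    (p := fun i => 1 + c * x i) (fun _ _ => by positivity)
    (by rw [Finset.sum_const, nsmul_eq_mul, mul_inv_cancel₀ hcard.ne'])
    (fun i hi => show 0 < 1 + c * x i by nlinarith [hx i hi])
  simp only [smul_eq_mul, ← Finset.mul_sum, mul_add, Finset.sum_add_distrib, Finset.sum_const,
    nsmul_eq_mul] at h
  have harg : (#s : ℝ)⁻¹ * (#s * 1) + (#s : ℝ)⁻¹ * (c * ∑ i ∈ s, x i)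
      = 1 + c * ((∑ i ∈ s, x i) / #s) := by
    field_simp
  rwa [harg, inv_mul_eq_div] at h

lemma integral_log_one_add_mul_mean_ge [IsFiniteMeasure μ] (hc : 0 ≤ c) (s : Finset ι)
    {X : ι → Ω → ℝ} (hX : ∀ i, Integrable (X i) μ) (hX0 : ∀ i ω, 0 ≤ X i ω) :
    log (1 + c) * (∑ i ∈ s, (μ.map (X i)).real (Ioi 1)) / #s
      ≤ ∫ ω, log (1 + c * ((∑ i ∈ s, X i ω) / #s)) ∂μ := by
  set g : ℝ → ℝ := (Ioi 1).indicator fun _ => log (1 + c)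
  have hg : Measurable g := measurable_const.indicator measurableSet_Ioi
  have hgX : ∀ i, Integrable (fun ω => g (X i ω)) μ := fun i =>
    (integrable_map_measure hg.aestronglyMeasurable (hX i).aemeasurable).1
      ((integrable_const _).indicator measurableSet_Ioi)
  have hmean : Integrable (fun ω => (∑ i ∈ s, X i ω) / #s) μ :=
    (integrable_finsetSum s fun i _ => hX i).div_const _
  calc log (1 + c) * (∑ i ∈ s, (μ.map (X i)).real (Ioi 1)) / #s
      = ∫ ω, (∑ i ∈ s, g (X i ω)) / #s ∂μ := by
        rw [integral_div, integral_finsetSum _ fun i _ => hgX i, Finset.mul_sum]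
        congr 1
        refine Finset.sum_congr rfl fun i _ => ?_
        rw [← integral_map (hX i).aemeasurable hg.aestronglyMeasurable,
          integral_indicator_const _ measurableSet_Ioi, smul_eq_mul, mul_comm]
    _ ≤ ∫ ω, log (1 + c * ((∑ i ∈ s, X i ω) / #s)) ∂μ := by
        refine integral_mono ((integrable_finsetSum _ fun i _ => hgX i).div_const _)
          (integrable_log_one_add_mul hmean (.of_forall fun ω =>
            div_nonneg (Finset.sum_nonneg fun i _ => hX0 i ω) (Nat.cast_nonneg _)) hc)
          fun ω => (div_le_div_of_nonneg_right (Finset.sum_le_sum fun i _ => ?_)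
            (Nat.cast_nonneg _)).trans (sum_log_one_add_mul_div_card_le hc s fun i _ => hX0 i ω)
        refine indicator_apply_le' (fun hi => log_le_log (by linarith) ?_)
          fun _ => log_nonneg (by nlinarith [hX0 i ω])
        nlinarith [show (1 : ℝ) < X i ω from hi]

end LogOneAddMul

section ExpOneLaw

variable {Ω : Type*} [MeasurableSpace Ω] {μ : Measure Ω}

lemma integrable_of_map_eq_expOneMeasure {X : Ω → ℝ} (hX : μ.map X = expOneMeasure) :
    Integrable X μ :=
  (integrable_map_measure aestronglyMeasurable_id
    (.of_map_ne_zero (hX ▸ IsProbabilityMeasure.ne_zero _))).1 (hX ▸ integrable_id_expOneMeasure)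

lemma integral_eq_one_of_map_eq_expOneMeasure {X : Ω → ℝ} (hX : μ.map X = expOneMeasure) :
    ∫ ω, X ω ∂μ = 1 := by
  rw [← integral_id_expOneMeasure, ← hX]
  exact (integral_map (.of_map_ne_zero (hX ▸ IsProbabilityMeasure.ne_zero _))
    aestronglyMeasurable_id).symm

variable {ι : Type*} [IsProbabilityMeasure μ] {X : ι → Ω → ℝ} {c : ℝ} {s : Finset ι}

lemma exp_neg_one_mul_log_le_integral_of_map_eq_expOneMeasure
    (hX : ∀ i, μ.map (X i) = expOneMeasure) (hX0 : ∀ i ω, 0 ≤ X i ω) (hc : 0 ≤ c)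
    (hs : s.Nonempty) :
    exp (-1) * log (1 + c) ≤ ∫ ω, log (1 + c * ((∑ i ∈ s, X i ω) / #s)) ∂μ := by
  have h := integral_log_one_add_mul_mean_ge hc s
    (fun i => integrable_of_map_eq_expOneMeasure (hX i)) hX0
  simp only [hX, expOneMeasure_real_Ioi zero_le_one, Finset.sum_const, nsmul_eq_mul] at h
  convert h using 1
  field_simp [hs.card_ne_zero]

lemma integral_le_log_one_add_of_map_eq_expOneMeasure
    (hX : ∀ i, μ.map (X i) = expOneMeasure) (hX0 : ∀ i ω, 0 ≤ X i ω) (hc : 0 ≤ c)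
    (hs : s.Nonempty) :
    ∫ ω, log (1 + c * ((∑ i ∈ s, X i ω) / #s)) ∂μ ≤ log (1 + c) := by
  have hXi i := integrable_of_map_eq_expOneMeasure (hX i)
  have h := integral_log_one_add_mul_le
    ((integrable_finsetSum s fun i _ => hXi i).div_const (#s : ℝ))
    (.of_forall fun ω => div_nonneg (Finset.sum_nonneg fun i _ => hX0 i ω) (Nat.cast_nonneg _)) hc
  rwa [integral_div, integral_finsetSum _ fun i _ => hXi i,
    Finset.sum_congr rfl fun i _ => integral_eq_one_of_map_eq_expOneMeasure (hX i),
    Finset.sum_const, nsmul_one, div_self (Nat.cast_ne_zero.2 hs.card_ne_zero), mul_one] at h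

end ExpOneLaw

section CeilRpow

variable {P ε : ℝ}

lemma eventually_mul_log_le_log_one_add_div_ceil_rpow (hP : 0 < P) (hε0 : 0 < ε)
    (hε1 : ε < 1) :
    ∀ᶠ N : ℕ in atTop, (1 - ε) / 2 * log N ≤ log (1 + P * N / ⌈(N : ℝ) ^ ε⌉₊) := by
  have hlog := tendsto_log_atTop.comp tendsto_natCast_atTop_atTop
  filter_upwards [hlog.eventually_ge_atTop (-2 / (1 - ε) * log (P / 2)), eventually_ge_atTop 1]
    with N hlogN hN
  rw [Function.comp_apply] at hlogN
  have hN0 : (0 : ℝ) < N := by exact_mod_cast hN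
  have hNε : 1 ≤ (N : ℝ) ^ ε := one_le_rpow (by exact_mod_cast hN) hε0.le
  have hB : (⌈(N : ℝ) ^ ε⌉₊ : ℝ) ≤ 2 * (N : ℝ) ^ ε := Nat.ceil_le_two_mul (by linarith)
  have hc : P / 2 * (N : ℝ) ^ (1 - ε) ≤ P * N / ⌈(N : ℝ) ^ ε⌉₊ := by
    calc P / 2 * (N : ℝ) ^ (1 - ε) = P * N / (2 * (N : ℝ) ^ ε) := by
          rw [rpow_sub hN0, rpow_one]
          ring
      _ ≤ P * N / ⌈(N : ℝ) ^ ε⌉₊ := by gcongr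
  have hlogN' : -log (P / 2) ≤ (1 - ε) / 2 * log N := by
    have := mul_le_mul_of_nonneg_left hlogN (by linarith : 0 ≤ (1 - ε) / 2)
    have hε : 1 - ε ≠ 0 := by linarith
    rwa [← mul_assoc, show (1 - ε) / 2 * (-2 / (1 - ε)) = -1 by field_simp, neg_one_mul] at this
  calc (1 - ε) / 2 * log N ≤ log (P / 2) + (1 - ε) * log N := by linarith
    _ = log (P / 2 * (N : ℝ) ^ (1 - ε)) := by
        rw [log_mul (by positivity) (by positivity), log_rpow hN0]
    _ ≤ log (1 + P * N / ⌈(N : ℝ) ^ ε⌉₊) := log_le_log (by positivity) (by linarith)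

lemma eventually_log_one_add_div_ceil_rpow_le (hP : 0 < P) :
    ∀ᶠ N : ℕ in atTop, log (1 + P * N / ⌈(N : ℝ) ^ ε⌉₊) ≤ 2 * log N := by
  have hlog := tendsto_log_atTop.comp tendsto_natCast_atTop_atTop
  filter_upwards [hlog.eventually_ge_atTop (log (1 + P)), eventually_ge_atTop 1] with N hlogN hN
  rw [Function.comp_apply] at hlogN
  have hN1 : (1 : ℝ) ≤ N := by exact_mod_cast hN
  have hB : (1 : ℝ) ≤ ⌈(N : ℝ) ^ ε⌉₊ := by
    exact_mod_cast Nat.ceil_pos.2 (rpow_pos_of_pos (by linarith) ε)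
  calc log (1 + P * N / ⌈(N : ℝ) ^ ε⌉₊) ≤ log ((1 + P) * N) := by
        refine log_le_log (by positivity) ?_
        have : P * N / ⌈(N : ℝ) ^ ε⌉₊ ≤ P * N := div_le_self (by positivity) hB
        nlinarith
    _ = log (1 + P) + log N := log_mul (by positivity) (by positivity)
    _ ≤ 2 * log N := by linarith

end CeilRpow

theorem stmt_3_general {Ω : Type*} [MeasureSpace Ω] [IsProbabilityMeasure (ℙ : Measure Ω)]
    (H : ℕ → Ω → ℂ)
    (hdist : ∀ r, Measure.map (fun ω => ‖H r ω‖ ^ 2) ℙ = expOneMeasure)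
    (P : ℝ) (hP : 0 < P) (ε : ℝ) (hε0 : 0 < ε) (hε1 : ε < 1)
    (B : ℕ → ℕ) (hB : ∀ N, B N = ⌈(N : ℝ) ^ ε⌉₊)
    (G : ℕ → Ω → ℝ)
    (hG : ∀ N ω, G N ω = (∑ r ∈ Finset.range N, ‖H r ω‖ ^ 2) / N) :
    ∃ c₁ c₂ : ℝ, 0 < c₁ ∧ 0 < c₂ ∧ ∃ N₀ : ℕ, ∀ N > N₀,
      c₁ ≤ ((B N : ℝ) * ∫ ω, Real.log (1 + P * N * G N ω / (B N : ℝ)) ∂(ℙ : Measure Ω))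
            / ((N : ℝ) ^ ε * Real.log N) ∧
      ((B N : ℝ) * ∫ ω, Real.log (1 + P * N * G N ω / (B N : ℝ)) ∂(ℙ : Measure Ω))
            / ((N : ℝ) ^ ε * Real.log N) ≤ c₂ := by
  obtain ⟨N₀, hN₀⟩ := eventually_atTop.1
    ((eventually_mul_log_le_log_one_add_div_ceil_rpow hP hε0 hε1).and
      ((eventually_log_one_add_div_ceil_rpow_le (ε := ε) hP).and (eventually_ge_atTop 2)))
  refine ⟨exp (-1) * ((1 - ε) / 2), 4, mul_pos (exp_pos _) (by linarith), four_pos, N₀,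
    fun N hN => ?_⟩
  obtain ⟨hlogc_ge, hlogc_le, hN2⟩ := hN₀ N hN.le
  rw [← hB] at hlogc_ge hlogc_le
  set c := P * N / (B N : ℝ)
  have hG' ω : P * N * G N ω / B N = c * ((∑ r ∈ Finset.range N, ‖H r ω‖ ^ 2) / N) := by
    rw [hG]; ring
  have hX0 r ω : 0 ≤ ‖H r ω‖ ^ 2 := by positivity
  have hs : (Finset.range N).Nonempty := Finset.nonempty_range_iff.2 (by omega)
  have hc : 0 ≤ c := by positivity
  have hE₁ := exp_neg_one_mul_log_le_integral_of_map_eq_expOneMeasure hdist hX0 hc hs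
  have hE₂ := integral_le_log_one_add_of_map_eq_expOneMeasure hdist hX0 hc hs
  simp only [Finset.card_range] at hE₁ hE₂
  simp_rw [hG']
  have hNε : 1 ≤ (N : ℝ) ^ ε := one_le_rpow (by exact_mod_cast (by omega : 1 ≤ N)) hε0.le
  have hBge : (N : ℝ) ^ ε ≤ B N := hB N ▸ Nat.le_ceil _
  have hBle : (B N : ℝ) ≤ 2 * (N : ℝ) ^ ε := hB N ▸ Nat.ceil_le_two_mul (by linarith)
  have hlogN : 0 < log N := log_pos (by exact_mod_cast hN2)
  rw [le_div_iff₀ (by positivity), div_le_iff₀ (by positivity)]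
  constructor
  · calc exp (-1) * ((1 - ε) / 2) * ((N : ℝ) ^ ε * log N)
        = (N : ℝ) ^ ε * (exp (-1) * ((1 - ε) / 2 * log N)) := by ring
      _ ≤ B N * (exp (-1) * log (1 + c)) := by gcongr
      _ ≤ _ := by gcongr
  · calc _ ≤ (2 * (N : ℝ) ^ ε) * (2 * log N) := by
          gcongr
          · exact (mul_nonneg (exp_pos _).le (log_nonneg (by linarith))).trans hE₁
          · exact hE₂.trans hlogc_le
      _ = 4 * ((N : ℝ) ^ ε * log N) := by ring

/-- Coherent capacity scaling, bandwidth exponent `ε < 1`: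
`B(N) · E[log(1 + P N G_N / B(N))] = Θ(N^ε log N)` where `B(N) = ⌈N^ε⌉` and
`G_N = (1/N) ∑_{r<N} |H r|²` with the `|H r|²` i.i.d. Exponential(1)
(i.e. `H r` i.i.d. standard complex Gaussian). -/
theorem stmt_3 {Ω : Type*} [MeasureSpace Ω] [IsProbabilityMeasure (ℙ : Measure Ω)]
    (H : ℕ → Ω → ℂ)
    (hmeas : ∀ r, Measurable (H r))
    (hindep : iIndepFun (fun r ω => ‖H r ω‖ ^ 2) ℙ)
    (hdist : ∀ r, Measure.map (fun ω => ‖H r ω‖ ^ 2) ℙ = expOneMeasure)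
    (P : ℝ) (hP : 0 < P) (ε : ℝ) (hε0 : 0 < ε) (hε1 : ε < 1)
    (B : ℕ → ℕ) (hB : ∀ N, B N = ⌈(N : ℝ) ^ ε⌉₊)
    (G : ℕ → Ω → ℝ)
    (hG : ∀ N ω, G N ω = (∑ r ∈ Finset.range N, ‖H r ω‖ ^ 2) / N) :
    ∃ c₁ c₂ : ℝ, 0 < c₁ ∧ 0 < c₂ ∧ ∃ N₀ : ℕ, ∀ N > N₀,
      c₁ ≤ ((B N : ℝ) * ∫ ω, Real.log (1 + P * N * G N ω / (B N : ℝ)) ∂(ℙ : Measure Ω))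
            / ((N : ℝ) ^ ε * Real.log N) ∧
      ((B N : ℝ) * ∫ ω, Real.log (1 + P * N * G N ω / (B N : ℝ)) ∂(ℙ : Measure Ω))
            / ((N : ℝ) ^ ε * Real.log N) ≤ c₂ :=
  stmt_3_general H hdist P hP ε hε0 hε1 B hB G hG
end

section
/- Let f : ℝ≥0 → ℝ≥0 be a non-decreasing concave function with f(0) = 0, and let P > 0, B ∈ ℕ. Then the supremum of ∑_{m=1}^{B} f(ρ_m) over all ρ ∈ ℝ≥0^B with ∑ρ_m ≤ P equals max_{M ∈ {1,…,B}} M·f(P/M). -/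
open Filter

/-- For a non-decreasing concave per-subchannel capacity function `f` with `f 0 = 0`,
the optimal power allocation over `B` parallel subchannels with total power `P` uses
some number `M` of active subchannels with equal power `P/M`:
`sup { ∑ f(ρ m) : ρ ≥ 0, ∑ ρ m ≤ P } = max_{1 ≤ M ≤ B} M · f(P/M)`. -/
theorem stmt_6 (f : ℝ → ℝ)
    (hmono : MonotoneOn f (Set.Ici 0))
    (hconc : ConcaveOn ℝ (Set.Ici 0) f)
    (hf0 : f 0 = 0)
    (hfnn : ∀ x ≥ (0 : ℝ), 0 ≤ f x)
    (P : ℝ) (hP : 0 < P) (B : ℕ) :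
    sSup {y : ℝ | ∃ ρ : Fin B → ℝ, (∀ m, 0 ≤ ρ m) ∧ (∑ m, ρ m) ≤ P ∧
        y = ∑ m, f (ρ m)}
      = ⨆ M ∈ Finset.Icc 1 B, ((M : ℝ) * f (P / M)) := by
  rcases Nat.eq_zero_or_pos B with hB | hB
  · subst hB
    have hset : {y : ℝ | ∃ ρ : Fin 0 → ℝ, (∀ m, 0 ≤ ρ m) ∧ (∑ m, ρ m) ≤ P ∧
        y = ∑ m, f (ρ m)} = {0} := by
      ext y
      constructor
      · rintro ⟨ρ, -, -, rfl⟩; simp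
      · rintro rfl
        exact ⟨fun m => m.elim0, fun m => m.elim0, by simp [hP.le], by simp⟩
    rw [hset, csSup_singleton]
    have : Finset.Icc 1 0 = (∅ : Finset ℕ) := by decide
    rw [this]
    simp [Real.iSup_of_isEmpty]
  · -- B ≥ 1
    have hBpos : (0 : ℝ) < B := by exact_mod_cast hB
    have hPB : (0 : ℝ) ≤ P / B := le_of_lt (div_pos hP hBpos)
    -- Jensen upper bound
    have key : ∀ ρ : Fin B → ℝ, (∀ m, 0 ≤ ρ m) → (∑ m, ρ m) ≤ P →
        (∑ m, f (ρ m)) ≤ B * f (P / B) := by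
      intro ρ hnn hsum
      have h₁ : ∑ _m : Fin B, (B : ℝ)⁻¹ = 1 := by
        simp [Finset.sum_const]
        field_simp
      have hjen := hconc.le_map_sum (t := Finset.univ) (w := fun _ => (B : ℝ)⁻¹)
        (p := ρ) (fun i _ => by positivity) h₁ (fun i _ => hnn i)
      simp only [smul_eq_mul] at hjen
      have hsum' : (∑ i : Fin B, (B : ℝ)⁻¹ * ρ i) ≤ P / B := by
        rw [← Finset.mul_sum, div_eq_inv_mul]
        exact mul_le_mul_of_nonneg_left hsum (by positivity)
      have hmem : (∑ i : Fin B, (B : ℝ)⁻¹ * ρ i) ∈ Set.Ici (0 : ℝ) := by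
        rw [Set.mem_Ici]
        apply Finset.sum_nonneg; intro i _
        exact mul_nonneg (by positivity) (hnn i)
      have := hmono hmem (Set.mem_Ici.mpr hPB) hsum'
      have h2 : (∑ i : Fin B, (B : ℝ)⁻¹ * f (ρ i)) ≤ f (P / B) := le_trans hjen this
      have h3 : (∑ i : Fin B, (B : ℝ)⁻¹ * f (ρ i)) = (B : ℝ)⁻¹ * ∑ i, f (ρ i) := by
        rw [Finset.mul_sum]
      rw [h3] at h2
      calc (∑ m, f (ρ m)) = B * ((B : ℝ)⁻¹ * ∑ m, f (ρ m)) := by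
            field_simp
        _ ≤ B * f (P / B) := mul_le_mul_of_nonneg_left h2 hBpos.le
    -- M f(P/M) ≤ B f(P/B) for 1 ≤ M ≤ B
    have keyM : ∀ M : ℕ, M ∈ Finset.Icc 1 B → (M : ℝ) * f (P / M) ≤ B * f (P / B) := by
      intro M hM
      obtain ⟨hM1, hMB⟩ := Finset.mem_Icc.mp hM
      have hMpos : (0 : ℝ) < M := by exact_mod_cast hM1
      have hMB' : (M : ℝ) ≤ B := by exact_mod_cast hMB
      have ht0 : (0 : ℝ) ≤ M / B := by positivity
      have ht1 : M / (B : ℝ) ≤ 1 := by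
        rw [div_le_one hBpos]; exact hMB'
      have hx : P / (M : ℝ) ∈ Set.Ici (0 : ℝ) := le_of_lt (div_pos hP hMpos)
      have h0 : (0 : ℝ) ∈ Set.Ici (0 : ℝ) := Set.mem_Ici.mpr le_rfl
      have hab : (M / (B : ℝ)) + (1 - M / B) = 1 := by ring
      have hc := hconc.2 hx h0 ht0 (by linarith) hab
      simp only [smul_eq_mul, mul_zero, add_zero, hf0] at hc
      have heq : (M / (B : ℝ)) * (P / M) = P / B := by
        field_simp
      rw [heq] at hc
      -- hc : M/B * f (P/M) ≤ f (P/B)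
      have := mul_le_mul_of_nonneg_left hc hBpos.le
      calc (M : ℝ) * f (P / M) = B * (M / B * f (P / M)) := by field_simp
        _ ≤ B * f (P / B) := this
    -- the set
    set S := {y : ℝ | ∃ ρ : Fin B → ℝ, (∀ m, 0 ≤ ρ m) ∧ (∑ m, ρ m) ≤ P ∧
        y = ∑ m, f (ρ m)} with hS
    have hmemS : (B : ℝ) * f (P / B) ∈ S := by
      refine ⟨fun _ => P / B, fun m => hPB, ?_, ?_⟩
      · rw [Finset.sum_const]
        simp only [Finset.card_univ, Fintype.card_fin, nsmul_eq_mul]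
        rw [mul_div_cancel₀ _ (ne_of_gt hBpos)]
      · rw [Finset.sum_const]
        simp [Finset.card_univ, nsmul_eq_mul]
    have hbdd : ∀ y ∈ S, y ≤ (B : ℝ) * f (P / B) := by
      rintro y ⟨ρ, hnn, hsum, rfl⟩
      exact key ρ hnn hsum
    have hLHS : sSup S = (B : ℝ) * f (P / B) :=
      le_antisymm (csSup_le ⟨_, hmemS⟩ hbdd)
        (le_csSup ⟨_, hbdd⟩ hmemS)
    -- RHS
    have hBmem : B ∈ Finset.Icc 1 B := Finset.mem_Icc.mpr ⟨hB, le_refl B⟩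
    have hRHS : (⨆ M ∈ Finset.Icc 1 B, ((M : ℝ) * f (P / M))) = (B : ℝ) * f (P / B) := by
      apply le_antisymm
      · apply ciSup_le
        intro M
        rcases Decidable.em (M ∈ Finset.Icc 1 B) with h | h
        · rw [ciSup_pos h]; exact keyM M h
        · haveI : IsEmpty (M ∈ Finset.Icc 1 B) := ⟨h⟩
          rw [Real.iSup_of_isEmpty]
          exact mul_nonneg hBpos.le (hfnn _ hPB)
      · have hb : BddAbove (Set.range fun M => ⨆ _ : M ∈ Finset.Icc 1 B, ((M : ℝ) * f (P / M))) := by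
          refine ⟨(B : ℝ) * f (P / B), ?_⟩
          rintro y ⟨M, rfl⟩
          dsimp only
          rcases Decidable.em (M ∈ Finset.Icc 1 B) with h | h
          · rw [ciSup_pos h]; exact keyM M h
          · haveI : IsEmpty (M ∈ Finset.Icc 1 B) := ⟨h⟩
            rw [Real.iSup_of_isEmpty]
            exact mul_nonneg hBpos.le (hfnn _ hPB)
        have := le_ciSup hb B
        rwa [ciSup_pos hBmem] at this
    rw [hLHS, hRHS]
end
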